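/- arXiv:1805.01584 — 3 statements merged into one kernel-verified Lean document; each statement's English description precedes it below -/
import Mathlib

section
/- Let H be a Hilbert space, L a self-adjoint operator, a < b reals not in the spectrum of L, and suppose on the spectral subspace where the spectrum of L lies in (a, b) one has 0 < λ − a < b⁻ for every spectral value λ ∈ (a,b), where b⁻ = sup{λ ∈ spec(L) : λ < b} < b. Then for every u in the spectral subspace E₁ ⊕ E₂ corresponding to spec(L) ∩ (−∞, b), one has ⟨(L − a − b)u, u⟩ ≤ −γ₁‖u‖_E², where ‖u‖_E² = ⟨|L − a|u, u⟩ and γ₁ = min{1, b/b⁻ − 1} > 0. -/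
/-! Spectrally, the claim is the scalar inequality `λ - a - b ≤ -γ₁ |λ - a|` for every `λ` with
`λ - a < b⁻`, summed against the weights `α_k²`. Below `a` it holds because `γ₁ ≤ 1` and `b ≥ 0`;
above `a` it reads `(1 + γ₁)(λ - a) ≤ b`, and `1 + γ₁ ≤ b / b⁻` with `λ - a < b⁻`. -/

lemma min_one_div_sub_one_pos {b bm : ℝ} (hbm : 0 < bm) (hbmb : bm < b) :
    0 < min 1 (b / bm - 1) :=
  lt_min one_pos (sub_pos.mpr ((one_lt_div hbm).mpr hbmb))

lemma sub_sub_le_neg_mul_abs_sub {x a b bm γ : ℝ} (hbm : 0 < bm) (hb : 0 ≤ b)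
    (hγ₁ : γ ≤ 1) (hγ₂ : γ ≤ b / bm - 1) (hgap : a < x → x - a < bm) :
    x - a - b ≤ -γ * |x - a| := by
  rcases le_or_gt x a with hxa | hax
  · rw [abs_of_nonpos (sub_nonpos.mpr hxa)]
    nlinarith
  · rw [abs_of_pos (sub_pos.mpr hax)]
    have hscaled : (1 + γ) * (x - a) ≤ b / bm * (x - a) :=
      mul_le_mul_of_nonneg_right (by linarith) (sub_pos.mpr hax).le
    have hgap' : b / bm * (x - a) ≤ b / bm * bm :=
      mul_le_mul_of_nonneg_left (hgap hax).le (div_nonneg hb hbm.le)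
    rw [div_mul_cancel₀ b hbm.ne'] at hgap'
    linarith

lemma summable_mul_of_summable_abs_mul {ι : Type*} {f w : ι → ℝ} (hw : ∀ i, 0 ≤ w i)
    (h : Summable fun i => |f i| * w i) : Summable fun i => f i * w i :=
  Summable.of_abs (by simpa only [abs_mul, abs_of_nonneg (hw _)] using h)

theorem stmt_7_general (lam : ℕ → ℝ) (a b bm : ℝ) (hbm : 0 < bm) (hbmb : bm < b)
    (hgap : ∀ k, a < lam k → lam k - a < bm)
    (α : ℕ → ℝ) (hα : Summable fun k => α k ^ 2)
    (hαE : Summable fun k => |lam k - a| * α k ^ 2) :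
    (∑' k, (lam k - a - b) * α k ^ 2 ≤
      -(min 1 (b / bm - 1)) * ∑' k, |lam k - a| * α k ^ 2) ∧
    0 < min 1 (b / bm - 1) := by
  set γ := min 1 (b / bm - 1)
  refine ⟨?_, min_one_div_sub_one_pos hbm hbmb⟩
  have hpointwise : ∀ k, (lam k - a - b) * α k ^ 2 ≤ -γ * (|lam k - a| * α k ^ 2) := fun k => by
    rw [← mul_assoc]
    exact mul_le_mul_of_nonneg_right (sub_sub_le_neg_mul_abs_sub hbm (by linarith)
      (min_le_left _ _) (min_le_right _ _) (hgap k)) (sq_nonneg _)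
  have hsummable : Summable fun k => (lam k - a - b) * α k ^ 2 := by
    simpa only [sub_mul] using
      (summable_mul_of_summable_abs_mul (fun k => sq_nonneg (α k)) hαE).sub (hα.mul_left b)
  calc ∑' k, (lam k - a - b) * α k ^ 2
      ≤ ∑' k, -γ * (|lam k - a| * α k ^ 2) :=
        hsummable.tsum_le_tsum hpointwise (hαE.mul_left _)
    _ = -γ * ∑' k, |lam k - a| * α k ^ 2 := tsum_mul_left

theorem stmt_7 (lam : ℕ → ℝ) (a b bm : ℝ) (hab : a < b) (hbm : 0 < bm) (hbmb : bm < b)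
    (hlt : ∀ k, lam k < b) (hne : ∀ k, lam k ≠ a)
    (hgap : ∀ k, a < lam k → lam k - a < bm)
    (α : ℕ → ℝ) (hα : Summable fun k => α k ^ 2)
    (hαE : Summable fun k => |lam k - a| * α k ^ 2) :
    (∑' k, (lam k - a - b) * α k ^ 2 ≤
      -(min 1 (b / bm - 1)) * ∑' k, |lam k - a| * α k ^ 2) ∧
    0 < min 1 (b / bm - 1) :=
  stmt_7_general lam a b bm hbm hbmb hgap α hα hαE
end

section
/- Let H be a Hilbert space, E₁, E₂, E₃ pairwise orthogonal closed subspaces with H = E₁ ⊕ E₂ ⊕ E₃. Suppose Φ : H → ℝ is C¹ and there is γ > 0 such that ⟨Φ'(u+w+v₁) − Φ'(u+w+v₂), v₁−v₂⟩ ≤ −γ‖v₁−v₂‖² for v₁,v₂ ∈ E₁, u ∈ E₂, w ∈ E₃, and ⟨Φ'(u+w₁+v) − Φ'(u+w₂+v), w₁−w₂⟩ ≥ γ‖w₁−w₂‖² for w₁,w₂ ∈ E₃, v ∈ E₁, u ∈ E₂. Then for each u ∈ E₂ there exists a unique point h(u) ∈ E₁ ⊕ E₃ such that the restriction of Φ'(u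 + ·) to E₁ ⊕ E₃ vanishes at h(u); moreover if u + v (v ∈ E₁ ⊕ E₃) is a critical point of Φ then v = h(u). -/
/-! Fix `u`. For each `w ∈ E₃` the map `v ↦ Φ (u + w + v)` is strongly concave on `E₁`, so it has a
maximiser `v(w)`: the midpoint inequality makes every maximising sequence Cauchy. Comparing the
critical points `v(w)` and `v(w')` through the monotonicity estimate shows that `v` is continuous.
The value function `ψ w = Φ (u + w + v(w))` is strongly convex on `E₃` and has a minimiser `w₀`.
Comparing `ψ w₀ ≤ ψ (w₀ + t z)` with the convexity inequality at `w₀ + t z` gives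
`Φ'(u + w₀ + t z + v(w₀ + t z)) z ≥ 0` for `t > 0`; letting `t → 0⁺` shows that `Φ'(u + w₀ + v(w₀))`
also vanishes on `E₃`.
For uniqueness, the four tangent inequalities at two critical points add up to
`γ (‖v - v'‖² + ‖w - w'‖²) ≤ 0`. -/

open Filter Topology

section StrongConvexity

variable {E : Type*} [NormedAddCommGroup E] [NormedSpace ℝ E]

theorem tangent_add_half_le_of_hasFDerivAt {f : E → ℝ} {f' : E → E →L[ℝ] ℝ}
    (hf : ∀ y, HasFDerivAt f (f' y) y) {x d : E} {c : ℝ}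
    (h : ∀ t : ℝ, 0 < t → t < 1 → c * t ^ 2 ≤ t * (f' (x + t • d) d - f' x d)) :
    f x + f' x d + c / 2 ≤ f (x + d) := by
  have hk : ∀ t : ℝ, HasDerivAt (fun t => f (x + t • d) - c * t ^ 2 / 2)
      (f' (x + t • d) d - c * t) t := by
    intro t
    have hline : HasDerivAt (fun t : ℝ => x + t • d) d t := by
      simpa using ((hasDerivAt_id t).smul_const d).const_add x
    have hq : HasDerivAt (fun t : ℝ => c * t ^ 2 / 2) (c * t) t :=
      (((hasDerivAt_pow 2 t).const_mul c).div_const 2).congr_deriv (by push_cast; ring)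
    exact ((hf _).comp_hasDerivAt t hline).sub hq
  obtain ⟨ξ, ⟨hξ0, hξ1⟩, hξ⟩ := exists_hasDerivAt_eq_slope _ _ one_pos
    (fun t _ => (hk t).continuousAt.continuousWithinAt) (fun t _ => hk t)
  have hslope : c * ξ ≤ f' (x + ξ • d) d - f' x d := by
    have := h ξ hξ0 hξ1
    nlinarith
  norm_num at hξ
  linarith

def HasStrongSubgradientsOn (g : E → ℝ) (S : Set E) (c : ℝ) : Prop :=
  ∀ a ∈ S, ∃ ℓ : E →L[ℝ] ℝ, ∀ b ∈ S, g a + ℓ (b - a) + c * ‖b - a‖ ^ 2 ≤ g b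

namespace HasStrongSubgradientsOn

variable {g : E → ℝ} {S : Set E} {c : ℝ}

theorem bddBelow (h : HasStrongSubgradientsOn g S c) (hc : 0 < c) (hS : S.Nonempty) :
    BddBelow (g '' S) := by
  obtain ⟨a, ha⟩ := hS
  obtain ⟨ℓ, hℓ⟩ := h a ha
  refine ⟨g a - ‖ℓ‖ ^ 2 / (4 * c), ?_⟩
  rintro _ ⟨b, hb, rfl⟩
  have hℓb : -(‖ℓ‖ * ‖b - a‖) ≤ ℓ (b - a) :=
    neg_le_of_abs_le ((Real.norm_eq_abs _).symm ▸ ℓ.le_opNorm (b - a))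
  have hsq : ‖ℓ‖ * ‖b - a‖ - c * ‖b - a‖ ^ 2 ≤ ‖ℓ‖ ^ 2 / (4 * c) := by
    rw [le_div_iff₀ (by positivity)]
    nlinarith [sq_nonneg (‖ℓ‖ - 2 * c * ‖b - a‖)]
  linarith [hℓ b hb]

theorem midpoint_le (h : HasStrongSubgradientsOn g S c) (hS : Convex ℝ S) {x y : E}
    (hx : x ∈ S) (hy : y ∈ S) :
    2 * g (midpoint ℝ x y) + c / 2 * ‖x - y‖ ^ 2 ≤ g x + g y := by
  obtain ⟨ℓ, hℓ⟩ := h _ (hS.midpoint_mem hx hy)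
  have ex : x - midpoint ℝ x y = (2⁻¹ : ℝ) • (x - y) := by
    rw [left_sub_midpoint, invOf_eq_inv]
  have ey : y - midpoint ℝ x y = -((2⁻¹ : ℝ) • (x - y)) := by
    rw [right_sub_midpoint, invOf_eq_inv, ← smul_neg, neg_sub]
  have hx' := hℓ x hx
  have hy' := hℓ y hy
  rw [ex, norm_smul] at hx'
  rw [ey, map_neg, norm_neg, norm_smul] at hy'
  norm_num at hx' hy'
  nlinarith

theorem cauchySeq_of_tendsto (h : HasStrongSubgradientsOn g S c) (hc : 0 < c) (hS : Convex ℝ S)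
    {m : ℝ} (hm : ∀ y ∈ S, m ≤ g y) {xs : ℕ → E} (hxs : ∀ n, xs n ∈ S)
    (hlim : Tendsto (g ∘ xs) atTop (𝓝 m)) : CauchySeq xs := by
  rw [cauchySeq_iff_tendsto_dist_atTop_0]
  set ε : ℕ → ℝ := fun n => g (xs n) - m
  have hε : Tendsto (fun ij : ℕ × ℕ => √(2 / c * (ε ij.1 + ε ij.2))) atTop (𝓝 0) := by
    have hε0 : Tendsto ε atTop (𝓝 0) := by simpa using hlim.sub_const m
    have := ((hε0.comp tendsto_fst).add (hε0.comp tendsto_snd)).const_mul (2 / c)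
    rw [prod_atTop_atTop_eq] at this
    simpa [Function.comp_def] using (Real.continuous_sqrt.tendsto _).comp this
  refine squeeze_zero (fun _ => dist_nonneg) (fun ij => ?_) hε
  refine Real.le_sqrt_of_sq_le ?_
  have hmid := h.midpoint_le hS (hxs ij.1) (hxs ij.2)
  have := hm _ (hS.midpoint_mem (hxs ij.1) (hxs ij.2))
  rw [dist_eq_norm, div_mul_eq_mul_div, le_div_iff₀ hc]
  simp only [ε]
  nlinarith

theorem exists_isMinOn [CompleteSpace E] (h : HasStrongSubgradientsOn g S c) (hc : 0 < c)
    (hS : Convex ℝ S) (hSc : IsClosed S) (hne : S.Nonempty) (hg : LowerSemicontinuousOn g S) :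
    ∃ x ∈ S, IsMinOn g S x := by
  have hbdd := h.bddBelow hc hne
  set m := sInf (g '' S)
  have hm : ∀ y ∈ S, m ≤ g y := fun y hy => csInf_le hbdd ⟨y, hy, rfl⟩
  obtain ⟨r, -, hr, hrS⟩ := exists_seq_tendsto_sInf (hne.image g) hbdd
  choose xs hxs hgxs using hrS
  have hgxs' : Tendsto (g ∘ xs) atTop (𝓝 m) := by
    simpa [Function.comp_def, hgxs] using hr
  obtain ⟨x, hx⟩ := cauchySeq_tendsto_of_complete (h.cauchySeq_of_tendsto hc hS hm hxs hgxs')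
  have hxS : x ∈ S := hSc.mem_of_tendsto hx (Eventually.of_forall hxs)
  refine ⟨x, hxS, isMinOn_iff.2 fun y hy => le_trans ?_ (hm y hy)⟩
  have hxs' : Tendsto xs atTop (𝓝[S] x) :=
    tendsto_nhdsWithin_iff.2 ⟨hx, Eventually.of_forall hxs⟩
  refine le_of_forall_lt_imp_le_of_dense fun y hy => ?_
  exact ge_of_tendsto hgxs' ((hxs'.eventually (hg x hxS y hy)).mono fun n hn => hn.le)

end HasStrongSubgradientsOn

end StrongConvexity

section Saddle

variable {E : Type*} [NormedAddCommGroup E] [NormedSpace ℝ E]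

theorem fderiv_apply_eq_zero_of_isMaxOn_add {f : E → ℝ} {K : Submodule ℝ E} {x v z : E}
    (hmax : IsMaxOn (fun v => f (x + v)) K v) (hv : v ∈ K) (hd : DifferentiableAt ℝ f (x + v))
    (hz : z ∈ K) : fderiv ℝ f (x + v) z = 0 := by
  have hline : HasDerivAt (fun t : ℝ => x + v + t • z) z 0 := by
    simpa using ((hasDerivAt_id (0 : ℝ)).smul_const z).const_add (x + v)
  have hloc : IsLocalMax (fun t : ℝ => f (x + v + t • z)) 0 := Eventually.of_forall fun t => by
    simpa [add_assoc] using isMaxOn_iff.1 hmax _ (K.add_mem hv (K.smul_mem t hz))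
  exact hloc.hasDerivAt_eq_zero (hd.hasFDerivAt.comp_hasDerivAt_of_eq 0 hline (by simp))

theorem forall_mem_sup_apply_eq_zero_iff {F G : Submodule ℝ E} (ℓ : E →L[ℝ] ℝ) :
    (∀ z ∈ F ⊔ G, ℓ z = 0) ↔ (∀ z ∈ F, ℓ z = 0) ∧ ∀ z ∈ G, ℓ z = 0 := by
  simpa only [SetLike.le_def, LinearMap.mem_ker, ContinuousLinearMap.coe_coe] using
    sup_le_iff (a := F) (b := G) (c := LinearMap.ker (ℓ : E →ₗ[ℝ] ℝ))

structure StronglyConcaveConvexFDeriv (f : E → ℝ) (p : E) (F G : Submodule ℝ E) (γ : ℝ) :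
    Prop where
  concave : ∀ w ∈ G, ∀ v₁ ∈ F, ∀ v₂ ∈ F,
    fderiv ℝ f (p + w + v₁) (v₁ - v₂) - fderiv ℝ f (p + w + v₂) (v₁ - v₂) ≤ -γ * ‖v₁ - v₂‖ ^ 2
  convex : ∀ v ∈ F, ∀ w₁ ∈ G, ∀ w₂ ∈ G,
    γ * ‖w₁ - w₂‖ ^ 2 ≤ fderiv ℝ f (p + w₁ + v) (w₁ - w₂) - fderiv ℝ f (p + w₂ + v) (w₁ - w₂)

namespace StronglyConcaveConvexFDeriv

variable {f : E → ℝ} {p : E} {F G : Submodule ℝ E} {γ : ℝ}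

theorem le_tangent (hf : StronglyConcaveConvexFDeriv f p F G γ) (hd : Differentiable ℝ f)
    {w a b : E} (hw : w ∈ G) (ha : a ∈ F) (hb : b ∈ F) :
    f (p + w + b) ≤ f (p + w + a) + fderiv ℝ f (p + w + a) (b - a) - γ / 2 * ‖b - a‖ ^ 2 := by
  have key := tangent_add_half_le_of_hasFDerivAt (f := fun x => -f x)
    (fun y => (hd y).hasFDerivAt.neg) (x := p + w + a) (d := b - a) (c := γ * ‖b - a‖ ^ 2)
    fun t ht _ => by
      have h := hf.concave w hw _ (F.add_mem ha (F.smul_mem t (F.sub_mem hb ha))) a ha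
      rw [add_sub_cancel_left, map_smul, map_smul, norm_smul, mul_pow, Real.norm_eq_abs,
        sq_abs, ← add_assoc] at h
      simp only [neg_apply, smul_eq_mul] at h ⊢
      nlinarith
  rw [add_add_sub_cancel, neg_apply] at key
  linarith

theorem tangent_le (hf : StronglyConcaveConvexFDeriv f p F G γ) (hd : Differentiable ℝ f)
    {v a b : E} (hv : v ∈ F) (ha : a ∈ G) (hb : b ∈ G) :
    f (p + a + v) + fderiv ℝ f (p + a + v) (b - a) + γ / 2 * ‖b - a‖ ^ 2 ≤ f (p + b + v) := by
  have key := tangent_add_half_le_of_hasFDerivAt (fun y => (hd y).hasFDerivAt)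
    (x := p + a + v) (d := b - a) (c := γ * ‖b - a‖ ^ 2) fun t ht _ => by
      have h := hf.convex v hv _ (G.add_mem ha (G.smul_mem t (G.sub_mem hb ha))) a ha
      rw [add_sub_cancel_left, map_smul, map_smul, norm_smul, mul_pow, Real.norm_eq_abs,
        sq_abs, show p + (a + t • (b - a)) + v = p + a + v + t • (b - a) by abel] at h
      simp only [smul_eq_mul] at h
      nlinarith
  rw [show p + a + v + (b - a) = p + b + v by abel] at key
  linarith

theorem exists_isMaxOn [CompleteSpace E] (hf : StronglyConcaveConvexFDeriv f p F G γ)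
    (hd : Differentiable ℝ f) (hF : IsClosed (F : Set E)) (hγ : 0 < γ) {w : E} (hw : w ∈ G) :
    ∃ v ∈ F, IsMaxOn (fun v => f (p + w + v)) F v := by
  have hsub : HasStrongSubgradientsOn (fun v => -f (p + w + v)) F (γ / 2) := fun a ha =>
    ⟨-fderiv ℝ f (p + w + a), fun b hb => by
      have := hf.le_tangent hd hw ha hb
      rw [neg_apply]
      linarith⟩
  obtain ⟨v, hv, hmin⟩ := hsub.exists_isMinOn (by positivity) F.convex hF ⟨0, F.zero_mem⟩
    (hd.continuous.comp (continuous_const_add _)).neg.continuousOn.lowerSemicontinuousOn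
  exact ⟨v, hv, by simpa using hmin.neg⟩

theorem mul_norm_sub_le (hf : StronglyConcaveConvexFDeriv f p F G γ) {w w' v v' : E}
    (hw : w ∈ G) (hv : v ∈ F) (hv' : v' ∈ F)
    (hcrit : ∀ z ∈ F, fderiv ℝ f (p + w + v) z = 0)
    (hcrit' : ∀ z ∈ F, fderiv ℝ f (p + w' + v') z = 0) :
    γ * ‖v - v'‖ ≤ ‖fderiv ℝ f (p + w + v') - fderiv ℝ f (p + w' + v')‖ := by
  have hvv' : v - v' ∈ F := F.sub_mem hv hv'
  have hsq : γ * ‖v - v'‖ ^ 2 ≤ (fderiv ℝ f (p + w + v') - fderiv ℝ f (p + w' + v')) (v - v') := by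
    have := hf.concave w hw v hv v' hv'
    rw [sub_apply, hcrit' _ hvv']
    linarith [hcrit _ hvv']
  rcases (norm_nonneg (v - v')).eq_or_lt with h0 | hpos
  · rw [← h0, mul_zero]
    exact norm_nonneg _
  · refine le_of_mul_le_mul_right ?_ hpos
    calc γ * ‖v - v'‖ * ‖v - v'‖ ≤ _ := by nlinarith
      _ ≤ _ := (Real.le_norm_self _).trans (ContinuousLinearMap.le_opNorm _ _)

theorem continuousOn_of_crit (hf : StronglyConcaveConvexFDeriv f p F G γ) (hd : ContDiff ℝ 1 f)
    (hγ : 0 < γ) {vm : E → E} (hvm : ∀ w ∈ G, vm w ∈ F)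
    (hcrit : ∀ w ∈ G, ∀ z ∈ F, fderiv ℝ f (p + w + vm w) z = 0) : ContinuousOn vm G := by
  intro w₀ hw₀
  have hD : Tendsto (fun w => ‖fderiv ℝ f (p + w + vm w₀) - fderiv ℝ f (p + w₀ + vm w₀)‖ / γ)
      (𝓝[G] w₀) (𝓝 0) := by
    have hc : Continuous fun w => fderiv ℝ f (p + w + vm w₀) :=
      (hd.continuous_fderiv one_ne_zero).comp (by fun_prop)
    have := (((hc.tendsto w₀).sub_const (fderiv ℝ f (p + w₀ + vm w₀))).norm.div_const γ)
    simpa using this.mono_left nhdsWithin_le_nhds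
  rw [ContinuousWithinAt, tendsto_iff_norm_sub_tendsto_zero]
  refine squeeze_zero' (Eventually.of_forall fun _ => norm_nonneg _) ?_ hD
  filter_upwards [self_mem_nhdsWithin] with w hw
  rw [le_div_iff₀ hγ, mul_comm]
  exact hf.mul_norm_sub_le hw (hvm w hw) (hvm w₀ hw₀) (hcrit w hw) (hcrit w₀ hw₀)

theorem fderiv_apply_nonneg_of_isMinOn (hf : StronglyConcaveConvexFDeriv f p F G γ)
    (hd : ContDiff ℝ 1 f) (hγ : 0 ≤ γ) {vm : E → E} (hvm : ∀ w ∈ G, vm w ∈ F)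
    (hmax : ∀ w ∈ G, IsMaxOn (fun v => f (p + w + v)) F (vm w)) (hcont : ContinuousOn vm G)
    {w₀ z : E} (hw₀ : w₀ ∈ G) (hmin : IsMinOn (fun w => f (p + w + vm w)) G w₀) (hz : z ∈ G) :
    0 ≤ fderiv ℝ f (p + w₀ + vm w₀) z := by
  set w : ℝ → E := fun t => w₀ + t • z
  have hwG : ∀ t, w t ∈ G := fun t => G.add_mem hw₀ (G.smul_mem t hz)
  have hpos : ∀ t : ℝ, 0 < t → 0 ≤ fderiv ℝ f (p + w t + vm (w t)) z := by
    intro t ht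
    have htan := hf.tangent_le (hd.differentiable one_ne_zero) (hvm _ (hwG t)) (hwG t) hw₀
    have hle_max := isMaxOn_iff.1 (hmax w₀ hw₀) _ (hvm _ (hwG t))
    have hmin_le := isMinOn_iff.1 hmin _ (hwG t)
    rw [show w₀ - w t = -(t • z) by simp [w], map_neg, map_smul, smul_eq_mul] at htan
    have : 0 ≤ t * fderiv ℝ f (p + w t + vm (w t)) z := by
      nlinarith [mul_nonneg hγ (sq_nonneg ‖-(t • z)‖)]
    exact (mul_nonneg_iff_of_pos_left ht).1 this
  have hw : Continuous w := continuous_const.add (continuous_id.smul continuous_const)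
  have hφ : Continuous fun t => fderiv ℝ f (p + w t + vm (w t)) z :=
    ((hd.continuous_fderiv one_ne_zero).comp ((continuous_const.add hw).add
      (hcont.comp_continuous hw hwG))).clm_apply continuous_const
  simpa [w] using ge_of_tendsto ((hφ.tendsto 0).mono_left nhdsWithin_le_nhds :
    Tendsto _ (𝓝[>] (0 : ℝ)) _) (eventually_nhdsWithin_of_forall fun t ht => hpos t ht)

theorem eq_of_crit (hf : StronglyConcaveConvexFDeriv f p F G γ) (hd : Differentiable ℝ f)
    (hγ : 0 < γ) {w w' v v' : E} (hw : w ∈ G) (hw' : w' ∈ G) (hv : v ∈ F) (hv' : v' ∈ F)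
    (hF : ∀ z ∈ F, fderiv ℝ f (p + w + v) z = 0) (hG : ∀ z ∈ G, fderiv ℝ f (p + w + v) z = 0)
    (hF' : ∀ z ∈ F, fderiv ℝ f (p + w' + v') z = 0)
    (hG' : ∀ z ∈ G, fderiv ℝ f (p + w' + v') z = 0) : w = w' ∧ v = v' := by
  have c1 := hf.le_tangent hd hw' hv' hv
  have c2 := hf.le_tangent hd hw hv hv'
  have c3 := hf.tangent_le hd hv hw hw'
  have c4 := hf.tangent_le hd hv' hw' hw
  rw [hF' _ (F.sub_mem hv hv')] at c1
  rw [hF _ (F.sub_mem hv' hv), norm_sub_rev] at c2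
  rw [hG _ (G.sub_mem hw' hw)] at c3
  rw [hG' _ (G.sub_mem hw hw'), norm_sub_rev] at c4
  have hsum : ‖w' - w‖ ^ 2 + ‖v - v'‖ ^ 2 ≤ 0 := by nlinarith
  have hw0 : ‖w' - w‖ ^ 2 = 0 := by nlinarith [sq_nonneg ‖w' - w‖, sq_nonneg ‖v - v'‖]
  have hv0 : ‖v - v'‖ ^ 2 = 0 := by nlinarith [sq_nonneg ‖w' - w‖, sq_nonneg ‖v - v'‖]
  rw [pow_eq_zero_iff two_ne_zero, norm_sub_eq_zero_iff] at hw0 hv0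
  exact ⟨hw0.symm, hv0⟩

theorem exists_crit [CompleteSpace E] (hf : StronglyConcaveConvexFDeriv f p F G γ)
    (hd : ContDiff ℝ 1 f) (hF : IsClosed (F : Set E)) (hG : IsClosed (G : Set E)) (hγ : 0 < γ) :
    ∃ w ∈ G, ∃ v ∈ F, (∀ z ∈ F, fderiv ℝ f (p + w + v) z = 0) ∧
      ∀ z ∈ G, fderiv ℝ f (p + w + v) z = 0 := by
  have hd₁ := hd.differentiable one_ne_zero
  choose! vm hvm hmax using fun w (hw : w ∈ G) => hf.exists_isMaxOn hd₁ hF hγ hw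
  have hcritF : ∀ w ∈ G, ∀ z ∈ F, fderiv ℝ f (p + w + vm w) z = 0 := fun w hw _ hz =>
    fderiv_apply_eq_zero_of_isMaxOn_add (hmax w hw) (hvm w hw) (hd₁ _) hz
  have hcont := hf.continuousOn_of_crit hd hγ hvm hcritF
  have hsub : HasStrongSubgradientsOn (fun w => f (p + w + vm w)) G (γ / 2) := fun a ha =>
    ⟨fderiv ℝ f (p + a + vm a), fun b hb => by
      have := hf.tangent_le hd₁ (hvm a ha) ha hb
      have := isMaxOn_iff.1 (hmax b hb) _ (hvm a ha)
      linarith⟩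
  have hψ : ContinuousOn (fun w => f (p + w + vm w)) G :=
    hd₁.continuous.comp_continuousOn ((continuousOn_const.add continuousOn_id).add hcont)
  obtain ⟨w₀, hw₀, hmin⟩ := hsub.exists_isMinOn (by positivity) G.convex hG ⟨0, G.zero_mem⟩
    hψ.lowerSemicontinuousOn
  have hnonneg : ∀ z ∈ G, 0 ≤ fderiv ℝ f (p + w₀ + vm w₀) z := fun _ hz =>
    hf.fderiv_apply_nonneg_of_isMinOn hd hγ.le hvm hmax hcont hw₀ hmin hz
  refine ⟨w₀, hw₀, vm w₀, hvm w₀ hw₀, hcritF w₀ hw₀, fun z hz => le_antisymm ?_ (hnonneg z hz)⟩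
  simpa using hnonneg (-z) (G.neg_mem hz)

theorem existsUnique_crit [CompleteSpace E] (hf : StronglyConcaveConvexFDeriv f p F G γ)
    (hd : ContDiff ℝ 1 f) (hF : IsClosed (F : Set E)) (hG : IsClosed (G : Set E)) (hγ : 0 < γ) :
    ∃ h ∈ F ⊔ G, (∀ z ∈ F ⊔ G, fderiv ℝ f (p + h) z = 0) ∧
      ∀ x ∈ F ⊔ G, (∀ z ∈ F ⊔ G, fderiv ℝ f (p + x) z = 0) → x = h := by
  obtain ⟨w, hw, v, hv, hcF, hcG⟩ := hf.exists_crit hd hF hG hγ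
  refine ⟨w + v, add_mem (Submodule.mem_sup_right hw) (Submodule.mem_sup_left hv), ?_,
    fun x hx hcrit => ?_⟩
  · rw [← add_assoc]
    exact (forall_mem_sup_apply_eq_zero_iff _).2 ⟨hcF, hcG⟩
  · obtain ⟨y, hy, z, hz, rfl⟩ := Submodule.mem_sup.1 hx
    rw [add_comm y z] at hcrit ⊢
    rw [← add_assoc] at hcrit
    obtain ⟨hcF', hcG'⟩ := (forall_mem_sup_apply_eq_zero_iff _).1 hcrit
    obtain ⟨rfl, rfl⟩ :=
      hf.eq_of_crit (hd.differentiable one_ne_zero) hγ hz hw hy hv hcF' hcG' hcF hcG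
    rfl

end StronglyConcaveConvexFDeriv

end Saddle

theorem stmt_16_general {H : Type*} [NormedAddCommGroup H] [InnerProductSpace ℝ H] [CompleteSpace H]
    (E₁ E₂ E₃ : Submodule ℝ H)
    (hc₁ : IsClosed (E₁ : Set H)) (hc₃ : IsClosed (E₃ : Set H))
    (Φ : H → ℝ) (hΦ : ContDiff ℝ 1 Φ) (γ : ℝ) (hγ : 0 < γ)
    (hconc : ∀ u ∈ E₂, ∀ w ∈ E₃, ∀ v₁ ∈ E₁, ∀ v₂ ∈ E₁,
      fderiv ℝ Φ (u + w + v₁) (v₁ - v₂) - fderiv ℝ Φ (u + w + v₂) (v₁ - v₂) ≤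
        -γ * ‖v₁ - v₂‖ ^ 2)
    (hconv : ∀ u ∈ E₂, ∀ v ∈ E₁, ∀ w₁ ∈ E₃, ∀ w₂ ∈ E₃,
      γ * ‖w₁ - w₂‖ ^ 2 ≤
        fderiv ℝ Φ (u + w₁ + v) (w₁ - w₂) - fderiv ℝ Φ (u + w₂ + v) (w₁ - w₂)) :
    ∀ u ∈ E₂, ∃ h ∈ E₁ ⊔ E₃,
      (∀ z ∈ E₁ ⊔ E₃, fderiv ℝ Φ (u + h) z = 0) ∧
      (∀ v ∈ E₁ ⊔ E₃, (∀ z ∈ E₁ ⊔ E₃, fderiv ℝ Φ (u + v) z = 0) → v = h) ∧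
      (∀ v ∈ E₁ ⊔ E₃, fderiv ℝ Φ (u + v) = 0 → v = h) := by
  intro u hu
  have hsaddle : StronglyConcaveConvexFDeriv Φ u E₁ E₃ γ := ⟨hconc u hu, hconv u hu⟩
  obtain ⟨h, hh, hcrit, huniq⟩ := hsaddle.existsUnique_crit hΦ hc₁ hc₃ hγ
  exact ⟨h, hh, hcrit, huniq, fun v hv hzero => huniq v hv fun z _ => by simp [hzero]⟩

theorem stmt_16 {H : Type*} [NormedAddCommGroup H] [InnerProductSpace ℝ H] [CompleteSpace H]
    (E₁ E₂ E₃ : Submodule ℝ H)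
    (hc₁ : IsClosed (E₁ : Set H)) (hc₂ : IsClosed (E₂ : Set H)) (hc₃ : IsClosed (E₃ : Set H))
    (h₁₂ : ∀ x ∈ E₁, ∀ y ∈ E₂, (inner ℝ x y : ℝ) = 0)
    (h₁₃ : ∀ x ∈ E₁, ∀ y ∈ E₃, (inner ℝ x y : ℝ) = 0)
    (h₂₃ : ∀ x ∈ E₂, ∀ y ∈ E₃, (inner ℝ x y : ℝ) = 0)
    (hspan : E₁ ⊔ E₂ ⊔ E₃ = ⊤)
    (Φ : H → ℝ) (hΦ : ContDiff ℝ 1 Φ) (γ : ℝ) (hγ : 0 < γ)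
    (hconc : ∀ u ∈ E₂, ∀ w ∈ E₃, ∀ v₁ ∈ E₁, ∀ v₂ ∈ E₁,
      fderiv ℝ Φ (u + w + v₁) (v₁ - v₂) - fderiv ℝ Φ (u + w + v₂) (v₁ - v₂) ≤
        -γ * ‖v₁ - v₂‖ ^ 2)
    (hconv : ∀ u ∈ E₂, ∀ v ∈ E₁, ∀ w₁ ∈ E₃, ∀ w₂ ∈ E₃,
      γ * ‖w₁ - w₂‖ ^ 2 ≤
        fderiv ℝ Φ (u + w₁ + v) (w₁ - w₂) - fderiv ℝ Φ (u + w₂ + v) (w₁ - w₂)) :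
    ∀ u ∈ E₂, ∃ h ∈ E₁ ⊔ E₃,
      (∀ z ∈ E₁ ⊔ E₃, fderiv ℝ Φ (u + h) z = 0) ∧
      (∀ v ∈ E₁ ⊔ E₃, (∀ z ∈ E₁ ⊔ E₃, fderiv ℝ Φ (u + v) z = 0) → v = h) ∧
      (∀ v ∈ E₁ ⊔ E₃, fderiv ℝ Φ (u + v) = 0 → v = h) :=
  stmt_16_general E₁ E₂ E₃ hc₁ hc₃ Φ hΦ γ hγ hconc hconv
end

section
/- Let λ_n = n + θ_n with θ_n > 0 and θ_n → 0, let p, q be coprime positive integers, μ_m = mq/p for m ∈ ℤ, and λ_{nm} = λ_n² − μ_m². Then for n, m with np = |m|q one has λ_{nm} = θ_n(2n + θ_n); moreover if additionally ρ₂/n ≤ θ_n ≤ ρ₁/(2n) with 0 < 2ρ₂ ≤ ρ₁, then every λ_{nm} with np = |m|q satisfies 2ρ₂ < λ_{nm} ≤ ρ₁ + (ρ₁/(2n))², and any λ ∈ Λ(L) with λ ∉ [2ρ₂, ρ₁] is attained by only finitely many pairs (n, m). -/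
/-!
At resonance `np = |m|q` one has `|μ_m| = n`, so `λ_{nm} = θ_n (2n + θ_n)`, which the bounds on
`θ_n` squeeze into `(2ρ₂, ρ₁ + (ρ₁/2n)²]`; a level `L` outside `[2ρ₂, ρ₁]` is therefore hit by
resonant pairs only for finitely many `n`. Off resonance `|np - |m|q| ≥ 1`, so once
`θ_n < 1/(2p)` we get `|λ_n - |μ_m|| ≥ 1/(2p)` and `|λ_{nm}| ≥ n/(2p) → ∞`. Thus only finitely many
`n` attain `L`, and for each `n` at most two values of `m` do.
-/

open Filter Topology

/-- `λ_{nm} = λ_n² - μ_m²` with `λ_n = n + θ_n` and `μ_m = m q / p`. -/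
noncomputable def waveEigenvalue (θ : ℕ → ℝ) (p q n : ℕ) (m : ℤ) : ℝ :=
  (n + θ n) ^ 2 - (m * q / p) ^ 2

lemma waveEigenvalue_eq_natAbs (θ : ℕ → ℝ) (p q n : ℕ) (m : ℤ) :
    waveEigenvalue θ p q n m = (n + θ n) ^ 2 - (m.natAbs * q / p) ^ 2 := by
  rw [waveEigenvalue, div_pow, div_pow, mul_pow, mul_pow, Nat.cast_natAbs, Int.cast_abs, sq_abs]

lemma natAbs_mul_div_eq_of_resonant {p q n : ℕ} {m : ℤ} (hp : p ≠ 0)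
    (h : n * p = m.natAbs * q) : (m.natAbs : ℝ) * q / p = n := by
  rw [div_eq_iff (Nat.cast_ne_zero.2 hp)]
  exact_mod_cast h.symm

lemma waveEigenvalue_of_resonant (θ : ℕ → ℝ) {p q n : ℕ} {m : ℤ} (hp : p ≠ 0)
    (h : n * p = m.natAbs * q) : waveEigenvalue θ p q n m = θ n * (2 * n + θ n) := by
  rw [waveEigenvalue_eq_natAbs, natAbs_mul_div_eq_of_resonant hp h]
  ring

lemma mem_Ioc_mul_two_mul_add {t x ρ₁ ρ₂ : ℝ} (ht : 0 < t) (hx : 0 < x)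
    (hlo : ρ₂ / x ≤ t) (hhi : t ≤ ρ₁ / (2 * x)) :
    t * (2 * x + t) ∈ Set.Ioc (2 * ρ₂) (ρ₁ + (ρ₁ / (2 * x)) ^ 2) := by
  have hsq : t ^ 2 ≤ (ρ₁ / (2 * x)) ^ 2 := pow_le_pow_left₀ ht.le hhi 2
  rw [div_le_iff₀ hx] at hlo
  rw [le_div_iff₀ (by positivity)] at hhi
  constructor <;> nlinarith

lemma inv_le_abs_sub_mul_div {p q n k : ℕ} (hp : 0 < p) (h : n * p ≠ k * q) :
    (p : ℝ)⁻¹ ≤ |(n : ℝ) - k * q / p| := by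
  have hp' : (0 : ℝ) < p := Nat.cast_pos.2 hp
  have hgap : (1 : ℝ) ≤ |(n : ℝ) * p - k * q| := by
    have hz : (n * p : ℤ) - k * q ≠ 0 := sub_ne_zero.2 (by exact_mod_cast h)
    exact_mod_cast Int.one_le_abs hz
  rw [show (n : ℝ) - k * q / p = (n * p - k * q) / p by field_simp, abs_div, abs_of_pos hp',
    inv_eq_one_div]
  gcongr

lemma abs_sub_mul_le_abs_sq_sub_sq {x y : ℝ} (hx : 0 ≤ x) (hy : 0 ≤ y) :
    |x - y| * x ≤ |x ^ 2 - y ^ 2| := by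
  rw [sq_sub_sq, abs_mul, abs_of_nonneg (add_nonneg hx hy), mul_comm]
  exact mul_le_mul_of_nonneg_right (le_add_of_nonneg_right hy) (abs_nonneg _)

lemma eventually_lt_abs_waveEigenvalue {θ : ℕ → ℝ} (hθ0 : Tendsto θ atTop (𝓝 0))
    (hθ : ∀ᶠ n in atTop, 0 ≤ θ n) {p : ℕ} (hp : 0 < p) (q : ℕ) (B : ℝ) :
    ∀ᶠ n in atTop, ∀ m : ℤ, n * p ≠ m.natAbs * q → B < |waveEigenvalue θ p q n m| := by
  have hp' : (0 : ℝ) < p := Nat.cast_pos.2 hp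
  have hsmall : ∀ᶠ n in atTop, θ n < (2 * p : ℝ)⁻¹ :=
    hθ0.eventually (gt_mem_nhds (by positivity))
  have hlarge : ∀ᶠ n : ℕ in atTop, 2 * p * B < n :=
    tendsto_natCast_atTop_atTop.eventually_gt_atTop _
  filter_upwards [hθ, hsmall, hlarge] with n hθn hsmall hlarge m hres
  set y : ℝ := m.natAbs * q / p
  have hgap : (2 * p : ℝ)⁻¹ ≤ |n + θ n - y| := by
    have hshift := abs_sub_abs_le_abs_sub ((n : ℝ) - y) (n + θ n - y)
    rw [show (n : ℝ) - y - (n + θ n - y) = -θ n by ring, abs_neg, abs_of_nonneg hθn] at hshift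
    calc (2 * p : ℝ)⁻¹ = (p : ℝ)⁻¹ - (2 * p : ℝ)⁻¹ := by field_simp; ring
      _ ≤ |n - y| - θ n := sub_le_sub (inv_le_abs_sub_mul_div hp hres) hsmall.le
      _ ≤ |n + θ n - y| := by linarith
  calc B < (2 * p : ℝ)⁻¹ * n := by rw [inv_mul_eq_div, lt_div_iff₀ (by positivity)]; linarith
    _ ≤ |n + θ n - y| * (n + θ n) :=
      mul_le_mul hgap (by linarith) (Nat.cast_nonneg n) (abs_nonneg _)
    _ ≤ |waveEigenvalue θ p q n m| := by
      rw [waveEigenvalue_eq_natAbs]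
      exact abs_sub_mul_le_abs_sq_sub_sq (by positivity) (by positivity)

lemma eventually_waveEigenvalue_ne_of_resonant {θ : ℕ → ℝ} {p q : ℕ} {ρ₁ ρ₂ L : ℝ}
    (hbounds : ∀ n : ℕ, 1 ≤ n → ∀ m : ℤ, n * p = m.natAbs * q →
      waveEigenvalue θ p q n m ∈ Set.Ioc (2 * ρ₂) (ρ₁ + (ρ₁ / (2 * n)) ^ 2))
    (hL : L ∉ Set.Icc (2 * ρ₂) ρ₁) :
    ∀ᶠ n in atTop, ∀ m : ℤ, n * p = m.natAbs * q → waveEigenvalue θ p q n m ≠ L := by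
  rcases not_and_or.1 hL with hlt | hgt
  · filter_upwards [eventually_ge_atTop 1] with n hn m hres
    exact ((not_le.1 hlt).trans (hbounds n hn m hres).1).ne'
  · have hlim : Tendsto (fun n : ℕ => ρ₁ + (ρ₁ / (2 * n)) ^ 2) atTop (𝓝 ρ₁) := by
      have h := (tendsto_const_nhds (x := ρ₁)).div_atTop
        (tendsto_natCast_atTop_atTop.const_mul_atTop (two_pos (α := ℝ)))
      simpa using (h.pow 2).const_add ρ₁
    filter_upwards [eventually_ge_atTop 1, hlim.eventually_lt_const (not_le.1 hgt)]
      with n hn hlt m hres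
    exact ((hbounds n hn m hres).2.trans_lt hlt).ne

lemma finite_setOf_waveEigenvalue_fst_eq (θ : ℕ → ℝ) {p q : ℕ} (hp : p ≠ 0) (hq : q ≠ 0)
    (n : ℕ) (L : ℝ) : {m : ℤ | waveEigenvalue θ p q n m = L}.Finite := by
  set c := ((n : ℝ) + θ n) ^ 2 - L
  have hroots : {y : ℝ | y ^ 2 = c}.Finite := by
    refine (Set.toFinite {√c, -√c}).subset fun y hy => ?_
    have habs : |y| = √c := by rw [← Real.sqrt_sq_eq_abs, show y ^ 2 = c from hy]
    exact (abs_eq (Real.sqrt_nonneg c)).1 habs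
  have hinj : Function.Injective fun m : ℤ => (m : ℝ) * q / p := fun a b h => by
    simpa [hp, hq] using h
  refine (hroots.preimage hinj.injOn).subset fun m (hm : waveEigenvalue θ p q n m = L) => ?_
  show ((m : ℝ) * q / p) ^ 2 = c
  rw [waveEigenvalue] at hm
  linarith

lemma finite_setOf_waveEigenvalue_eq {θ : ℕ → ℝ} {p q : ℕ} (hp : p ≠ 0) (hq : q ≠ 0) {L : ℝ}
    (h : ∀ᶠ n in atTop, ∀ m : ℤ, waveEigenvalue θ p q n m ≠ L) :
    {x : ℕ × ℤ | waveEigenvalue θ p q x.1 x.2 = L}.Finite := by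
  obtain ⟨N, hN⟩ := eventually_atTop.1 h
  refine ((Set.finite_Iio N).biUnion fun n _ => (Set.finite_singleton n).prod
    (finite_setOf_waveEigenvalue_fst_eq θ hp hq n L)).subset ?_
  rintro ⟨n, m⟩ hx
  exact Set.mem_iUnion₂.2 ⟨n, lt_of_not_ge fun hn => hN n hn m hx, rfl, hx⟩

theorem stmt_19_general (θ : ℕ → ℝ) (hθpos : ∀ n : ℕ, 1 ≤ n → 0 < θ n)
    (hθ0 : Filter.Tendsto θ Filter.atTop (nhds 0))
    (p q : ℕ) (hp : 0 < p) (hq : 0 < q)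
    (ρ₁ ρ₂ : ℝ) :
    (∀ n : ℕ, 1 ≤ n → ∀ m : ℤ, n * p = m.natAbs * q →
      ((n : ℝ) + θ n) ^ 2 - ((m : ℝ) * q / p) ^ 2 = θ n * (2 * n + θ n)) ∧
    ((∀ n : ℕ, 1 ≤ n → ρ₂ / n ≤ θ n ∧ θ n ≤ ρ₁ / (2 * n)) →
      (∀ n : ℕ, 1 ≤ n → ∀ m : ℤ, n * p = m.natAbs * q →
        2 * ρ₂ < ((n : ℝ) + θ n) ^ 2 - ((m : ℝ) * q / p) ^ 2 ∧
        ((n : ℝ) + θ n) ^ 2 - ((m : ℝ) * q / p) ^ 2 ≤ ρ₁ + (ρ₁ / (2 * n)) ^ 2) ∧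
      ∀ L : ℝ, L ∉ Set.Icc (2 * ρ₂) ρ₁ →
        {x : ℕ × ℤ | 1 ≤ x.1 ∧ ((x.1 : ℝ) + θ x.1) ^ 2 - ((x.2 : ℝ) * q / p) ^ 2 = L}.Finite) := by
  have hresonant : ∀ n : ℕ, 1 ≤ n → ∀ m : ℤ, n * p = m.natAbs * q →
      waveEigenvalue θ p q n m = θ n * (2 * n + θ n) :=
    fun _ _ _ h => waveEigenvalue_of_resonant θ hp.ne' h
  refine ⟨hresonant, fun hθρ => ?_⟩
  have hbounds : ∀ n : ℕ, 1 ≤ n → ∀ m : ℤ, n * p = m.natAbs * q →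
      waveEigenvalue θ p q n m ∈ Set.Ioc (2 * ρ₂) (ρ₁ + (ρ₁ / (2 * n)) ^ 2) := by
    intro n hn m h
    rw [hresonant n hn m h]
    exact mem_Ioc_mul_two_mul_add (hθpos n hn) (Nat.cast_pos.2 hn) (hθρ n hn).1 (hθρ n hn).2
  refine ⟨hbounds, fun L hL => ?_⟩
  have hθnonneg : ∀ᶠ n in atTop, 0 ≤ θ n := eventually_atTop.2 ⟨1, fun n hn => (hθpos n hn).le⟩
  refine (finite_setOf_waveEigenvalue_eq hp.ne' hq.ne' ?_).subset fun x hx => hx.2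
  filter_upwards [eventually_lt_abs_waveEigenvalue hθ0 hθnonneg hp q |L|,
    eventually_waveEigenvalue_ne_of_resonant hbounds hL] with n hoff hon m
  by_cases hres : n * p = m.natAbs * q
  · exact hon m hres
  · exact fun heq => (hoff m hres).ne (by rw [heq])

theorem stmt_19 (θ : ℕ → ℝ) (hθpos : ∀ n : ℕ, 1 ≤ n → 0 < θ n)
    (hθ0 : Filter.Tendsto θ Filter.atTop (nhds 0))
    (p q : ℕ) (hp : 0 < p) (hq : 0 < q) (hpq : Nat.Coprime p q)
    (ρ₁ ρ₂ : ℝ) (hρ₂ : 0 < ρ₂) (hρ : 2 * ρ₂ ≤ ρ₁) :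
    (∀ n : ℕ, 1 ≤ n → ∀ m : ℤ, n * p = m.natAbs * q →
      ((n : ℝ) + θ n) ^ 2 - ((m : ℝ) * q / p) ^ 2 = θ n * (2 * n + θ n)) ∧
    ((∀ n : ℕ, 1 ≤ n → ρ₂ / n ≤ θ n ∧ θ n ≤ ρ₁ / (2 * n)) →
      (∀ n : ℕ, 1 ≤ n → ∀ m : ℤ, n * p = m.natAbs * q →
        2 * ρ₂ < ((n : ℝ) + θ n) ^ 2 - ((m : ℝ) * q / p) ^ 2 ∧
        ((n : ℝ) + θ n) ^ 2 - ((m : ℝ) * q / p) ^ 2 ≤ ρ₁ + (ρ₁ / (2 * n)) ^ 2) ∧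
      ∀ L : ℝ, L ∉ Set.Icc (2 * ρ₂) ρ₁ →
        {x : ℕ × ℤ | 1 ≤ x.1 ∧ ((x.1 : ℝ) + θ x.1) ^ 2 - ((x.2 : ℝ) * q / p) ^ 2 = L}.Finite) :=
  stmt_19_general θ hθpos hθ0 p q hp hq ρ₁ ρ₂
end
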